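/- arXiv:2602.12149 — 3 statements merged into one kernel-verified Lean document; each statement's English description precedes it below -/
import Mathlib

section
/- For a filter 𝔽 on 𝒫(X) and B ⊆ X: B belongs to the grill of rdc(𝔽^#) (where rdc(𝔽^#) := {⋃_{C ∈ ℋ} C : ℋ ∈ 𝔽^#}) if and only if B⁻ := {C ⊆ X : C ∩ B ≠ ∅} belongs to 𝔽. -/
/-!
`B` meets `⋃₀ ℋ` exactly when some member of `ℋ` meets `B`, so `B ∈ (rdc 𝔸)^#` iff `B⁻ ∈ 𝔸^#`
for any `𝔸`. For a filter, `𝔽^## = 𝔽`: if `A ∉ 𝔽`, then `Aᶜ` meets every member of `𝔽`, so it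
lies in `𝔽^#` while missing `A`.
-/

/-- The grill of a family of subsets. -/
def grill {α : Type*} (𝒜 : Set (Set α)) : Set (Set α) :=
  {B | ∀ A ∈ 𝒜, (B ∩ A).Nonempty}

/-- The reduction of a family of families of subsets of `X`. -/
def rdc {X : Type*} (𝔸 : Set (Set (Set X))) : Set (Set X) :=
  Set.sUnion '' 𝔸

lemma mem_grill_filter_iff_compl_notMem {α : Type*} (𝔽 : Filter α) (B : Set α) :
    B ∈ grill 𝔽.sets ↔ Bᶜ ∉ 𝔽 := by
  change _ ↔ ∃ᶠ x in 𝔽, x ∈ B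
  rw [Filter.frequently_iff]
  exact forall₂_congr fun A _ => by rw [Set.inter_comm, Set.inter_nonempty]

lemma mem_grill_grill_iff {α : Type*} (𝔽 : Filter α) (A : Set α) :
    A ∈ grill (grill 𝔽.sets) ↔ A ∈ 𝔽 := by
  refine ⟨fun h => ?_, fun hA S hS => Set.inter_comm A S ▸ hS A hA⟩
  by_contra hA
  have hcompl : Aᶜ ∈ grill 𝔽.sets := by
    rwa [mem_grill_filter_iff_compl_notMem, compl_compl]
  simpa using h Aᶜ hcompl

lemma inter_sUnion_nonempty_iff {X : Type*} (B : Set X) (ℋ : Set (Set X)) :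
    (B ∩ ⋃₀ ℋ).Nonempty ↔ ({C : Set X | (C ∩ B).Nonempty} ∩ ℋ).Nonempty := by
  constructor
  · rintro ⟨x, hxB, C, hCℋ, hxC⟩
    exact ⟨C, ⟨x, hxC, hxB⟩, hCℋ⟩
  · rintro ⟨C, ⟨x, hxC, hxB⟩, hCℋ⟩
    exact ⟨x, hxB, C, hCℋ, hxC⟩

lemma mem_grill_rdc_iff {X : Type*} (𝔸 : Set (Set (Set X))) (B : Set X) :
    B ∈ grill (rdc 𝔸) ↔ {C : Set X | (C ∩ B).Nonempty} ∈ grill 𝔸 :=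
  Set.forall_mem_image.trans (forall₂_congr fun ℋ _ => inter_sUnion_nonempty_iff B ℋ)

/-- `B ∈ (rdc (𝔽^#))^#` iff `B⁻ ∈ 𝔽`. -/
theorem mem_grill_rdc_grill_iff {X : Type*} (𝔽 : Filter (Set X)) (B : Set X) :
    B ∈ grill (rdc (grill 𝔽.sets)) ↔ {C : Set X | (C ∩ B).Nonempty} ∈ 𝔽 := by
  rw [mem_grill_rdc_iff, mem_grill_grill_iff]
end

section
/- If (X, λ) is an approach space (satisfying the diagonal filter condition), then for all ε, α ∈ [0,∞] and every filter ℱ on X, one has {adh_λ ℱ ≤ ε}^(α) ⊆ {adh_λ ℱ ≤ ε + α}. -/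
open ENNReal

variable {X : Type*}

/-- Adherence function of a set in a preconvergence approach space. -/
noncomputable def adhSet (lam : Filter X → X → ℝ≥0∞) (A : Set X) (x : X) : ℝ≥0∞ :=
  ⨅ (U : Ultrafilter X) (_ : A ∈ U), lam (↑U) x

/-- Adherence function of a filter. -/
noncomputable def adhF (lam : Filter X → X → ℝ≥0∞) (F : Filter X) (x : X) : ℝ≥0∞ :=
  ⨅ (U : Ultrafilter X) (_ : (↑U : Filter X) ≤ F), lam (↑U) x

/-- `A^(ε)`. -/
noncomputable def enlarge (lam : Filter X → X → ℝ≥0∞) (A : Set X) (ε : ℝ≥0∞) : Set X :=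
  {x | adhSet lam A x ≤ ε}

/-!
Write `A = {adh ℱ ≤ ε}` (the case `ε = ∞` being trivial). Select for every `t ∈ A` an
ultrafilter `𝒢 t ≤ ℱ` with `λ (𝒢 t) t = adh ℱ t ≤ ε`, and `𝒢 t = pure t` elsewhere, so that
`sup_t λ (𝒢 t) t ≤ ε`. For an ultrafilter `𝒰 ∋ A` the contour `𝒢(𝒰)` is a proper filter finer
than `ℱ`, so by the diagonal condition `adh ℱ x₀ ≤ λ(𝒢(𝒰)) x₀ ≤ λ 𝒰 x₀ + ε`; taking the
infimum over `𝒰` gives `adh ℱ x₀ ≤ adh A x₀ + ε`.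
-/

theorem Filter.NeBot.bind {α β : Type*} {f : Filter α} {g : α → Filter β} (hf : f.NeBot)
    (hg : ∀ a, (g a).NeBot) : (f.bind g).NeBot := by
  refine Filter.forall_mem_nonempty_iff_neBot.1 fun s hs => ?_
  obtain ⟨a, ha⟩ := hf.nonempty_of_mem (Filter.mem_bind'.1 hs)
  exact (hg a).nonempty_of_mem ha

section Adherence

variable (lam : Filter X → X → ℝ≥0∞)

theorem adhF_bot (x : X) : adhF lam ⊥ x = ⊤ :=
  iInf₂_eq_top.2 fun U hU => absurd (le_bot_iff.1 hU) U.neBot.ne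

theorem neBot_of_adhF_ne_top {F : Filter X} {x : X} (h : adhF lam F x ≠ ⊤) : F.NeBot :=
  ⟨fun hF => h (hF ▸ adhF_bot lam x)⟩

theorem exists_adhF_selection (hcent : ∀ x : X, lam (pure x) x = 0)
    (hattain : ∀ F : Filter X, F.NeBot → ∀ x : X,
      ∃ U : Ultrafilter X, (↑U : Filter X) ≤ F ∧ lam (↑U) x = adhF lam F x)
    (F : Filter X) {ε : ℝ≥0∞} (hε : ε ≠ ⊤) (t : X) :
    ∃ G : Filter X, G.NeBot ∧ lam G t ≤ ε ∧ (adhF lam F t ≤ ε → G ≤ F) := by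
  by_cases ht : adhF lam F t ≤ ε
  · have hF : F.NeBot := neBot_of_adhF_ne_top lam (ne_top_of_le_ne_top hε ht)
    obtain ⟨U, hUF, hU⟩ := hattain F hF t
    exact ⟨U, U.neBot, hU ▸ ht, fun _ => hUF⟩
  · exact ⟨pure t, Filter.pure_neBot, (hcent t).trans_le zero_le, fun h => absurd h ht⟩

theorem adhF_le_lam_add_of_selection
    (hmono : ∀ F G : Filter X, F ≤ G → ∀ x, lam F x ≤ lam G x)
    (hdiag : ∀ (𝒢 : X → Filter X) (F : Filter X) (x₀ : X),
      lam (F.bind 𝒢) x₀ ≤ lam F x₀ + ⨆ t : X, lam (𝒢 t) t)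
    {F : Filter X} {A : Set X} {ε : ℝ≥0∞} {𝒢 : X → Filter X} (h𝒢ne : ∀ t, (𝒢 t).NeBot)
    (h𝒢lam : ∀ t, lam (𝒢 t) t ≤ ε) (h𝒢le : ∀ t ∈ A, 𝒢 t ≤ F)
    {U : Ultrafilter X} (hU : A ∈ U) (x₀ : X) :
    adhF lam F x₀ ≤ lam U x₀ + ε := by
  have hbind_le : (U : Filter X).bind 𝒢 ≤ F := Filter.bind_le (Filter.mem_of_superset hU h𝒢le)
  obtain ⟨V, hV⟩ := @Ultrafilter.exists_le _ _ (U.neBot.bind h𝒢ne)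
  calc adhF lam F x₀ ≤ lam V x₀ := iInf₂_le_of_le V (hV.trans hbind_le) le_rfl
    _ ≤ lam ((U : Filter X).bind 𝒢) x₀ := hmono _ _ hV x₀
    _ ≤ lam U x₀ + ⨆ t, lam (𝒢 t) t := hdiag 𝒢 U x₀
    _ ≤ lam U x₀ + ε := by gcongr; exact iSup_le h𝒢lam

end Adherence

/-- In an approach space, `{adh ℱ ≤ ε}^(α) ⊆ {adh ℱ ≤ ε + α}`. -/
theorem enlarge_adh_le (lam : Filter X → X → ℝ≥0∞)
    (hmono : ∀ F G : Filter X, F ≤ G → ∀ x, lam F x ≤ lam G x)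
    (hcent : ∀ x : X, lam (pure x) x = 0)
    (hdiag : ∀ (𝒢 : X → Filter X) (F : Filter X) (x₀ : X),
      lam (F.bind 𝒢) x₀ ≤ lam F x₀ + ⨆ t : X, lam (𝒢 t) t)
    (hattain : ∀ F : Filter X, F.NeBot → ∀ x : X,
      ∃ U : Ultrafilter X, (↑U : Filter X) ≤ F ∧ lam (↑U) x = adhF lam F x)
    (F : Filter X) (ε α : ℝ≥0∞) :
    enlarge lam {x | adhF lam F x ≤ ε} α ⊆ {x | adhF lam F x ≤ ε + α} := by
  intro x₀ hx₀
  rcases eq_or_ne ε ⊤ with rfl | hε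
  · simp
  choose 𝒢 h𝒢ne h𝒢lam h𝒢le using exists_adhF_selection lam hcent hattain F hε
  calc adhF lam F x₀ ≤ adhSet lam {x | adhF lam F x ≤ ε} x₀ + ε := by
        rw [adhSet, ENNReal.iInf₂_add]
        exact le_iInf₂ fun U hU =>
          adhF_le_lam_add_of_selection lam hmono hdiag h𝒢ne h𝒢lam h𝒢le hU x₀
    _ ≤ α + ε := by gcongr; exact hx₀
    _ = ε + α := add_comm _ _
end

section
/- If (X, λ) satisfies the diagonal filter condition λ(𝒢(ℱ))(x₀) ≤ λ(ℱ)(x₀) + sup_t λ(𝒢(t))(t) for all selections 𝒢 : X → Filter X, filters ℱ, and points x₀, then adh_λ A ≤ adh_λ (A^(ε)) + ε pointwise, for every A ⊆ X and every ε ∈ [0,∞]. -/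
open ENNReal

variable {X : Type*}

/-!
Fix `δ > 0`. Every point `t` of `A^(ε)` carries an ultrafilter `𝒢 t ∋ A` with
`λ(𝒢 t)(t) ≤ ε + δ`; off `A^(ε)` take `𝒢 t = pure t`, which costs nothing. For an ultrafilter
`𝒰 ∋ A^(ε)` the contour `𝒢(𝒰)` is an ultrafilter containing `A`, and the diagonal condition
bounds `λ(𝒢(𝒰))(x)` by `λ(𝒰)(x) + ε + δ`. Taking the infimum over `𝒰` and letting `δ → 0`
gives the claim.
-/

section

variable {lam : Filter X → X → ℝ≥0∞}

theorem exists_ultrafilter_lt_of_adhSet_lt {A : Set X} {t : X} {r : ℝ≥0∞}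
    (h : adhSet lam A t < r) :
    ∃ V : Ultrafilter X, A ∈ V ∧ lam V t < r := by
  simpa only [adhSet, iInf_lt_iff, exists_prop] using h

theorem adhSet_le_of_mem {A : Set X} {U : Ultrafilter X} (hA : A ∈ U) (x : X) :
    adhSet lam A x ≤ lam U x :=
  iInf₂_le U hA

variable (hcent : ∀ x : X, lam (pure x) x = 0)
  (hdiag : ∀ (𝒢 : X → Filter X) (F : Filter X) (x₀ : X),
    lam (F.bind 𝒢) x₀ ≤ lam F x₀ + ⨆ t : X, lam (𝒢 t) t)
include hcent hdiag

theorem adhSet_le_add_of_forall_mem_of_mem {A B : Set X} {r : ℝ≥0∞}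
    (hB : ∀ t ∈ B, ∃ V : Ultrafilter X, A ∈ V ∧ lam V t ≤ r)
    {U : Ultrafilter X} (hBU : B ∈ U) (x : X) :
    adhSet lam A x ≤ lam U x + r := by
  classical
  choose! G hGA hGle using hB
  let 𝒢 : X → Ultrafilter X := fun t => if t ∈ B then G t else pure t
  have hsup : ⨆ t, lam (𝒢 t) t ≤ r := iSup_le fun t => by
    by_cases ht : t ∈ B
    · simpa only [𝒢, if_pos ht] using hGle t ht
    · simp only [𝒢, if_neg ht, Ultrafilter.coe_pure, hcent, zero_le]
  have hA : A ∈ U.bind 𝒢 := show {t | A ∈ 𝒢 t} ∈ U from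
    Filter.mem_of_superset hBU fun t ht => by
      simpa only [Set.mem_ofPred_eq, 𝒢, if_pos ht] using hGA t ht
  calc adhSet lam A x ≤ lam (U.bind 𝒢) x := adhSet_le_of_mem hA x
    _ ≤ lam U x + ⨆ t, lam (𝒢 t) t := hdiag (fun t => 𝒢 t) U x
    _ ≤ lam U x + r := by gcongr

theorem adhSet_le_adhSet_add_of_forall_mem {A B : Set X} {r : ℝ≥0∞}
    (hB : ∀ t ∈ B, ∃ V : Ultrafilter X, A ∈ V ∧ lam V t ≤ r) (x : X) :
    adhSet lam A x ≤ adhSet lam B x + r := by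
  calc adhSet lam A x ≤ ⨅ (U : Ultrafilter X) (_ : B ∈ U), lam U x + r :=
        le_iInf₂ fun _ hBU => adhSet_le_add_of_forall_mem_of_mem hcent hdiag hB hBU x
    _ = adhSet lam B x + r := by simp only [adhSet, ENNReal.iInf_add]

end

theorem diag_implies_adh_enlarge_general (lam : Filter X → X → ℝ≥0∞)
    (hcent : ∀ x : X, lam (pure x) x = 0)
    (hdiag : ∀ (𝒢 : X → Filter X) (F : Filter X) (x₀ : X),
      lam (F.bind 𝒢) x₀ ≤ lam F x₀ + ⨆ t : X, lam (𝒢 t) t) :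
    ∀ (A : Set X) (ε : ℝ≥0∞) (x : X),
      adhSet lam A x ≤ adhSet lam (enlarge lam A ε) x + ε := by
  intro A ε x
  refine ENNReal.le_of_forall_pos_le_add fun δ hδ hfin => ?_
  have hε : ε < ε + δ := ENNReal.lt_add_right (ne_top_of_lt (lt_of_le_of_lt le_add_self hfin))
    (by exact_mod_cast hδ.ne')
  have hsel : ∀ t ∈ enlarge lam A ε, ∃ V : Ultrafilter X, A ∈ V ∧ lam V t ≤ ε + δ :=
    fun t ht => (exists_ultrafilter_lt_of_adhSet_lt (lt_of_le_of_lt ht hε)).imp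
      fun _ hV => ⟨hV.1, hV.2.le⟩
  rw [add_assoc]
  exact adhSet_le_adhSet_add_of_forall_mem hcent hdiag hsel x

/-- The diagonal filter condition implies `adh A ≤ adh (A^(ε)) + ε`. -/
theorem diag_implies_adh_enlarge (lam : Filter X → X → ℝ≥0∞)
    (hmono : ∀ F G : Filter X, F ≤ G → ∀ x, lam F x ≤ lam G x)
    (hcent : ∀ x : X, lam (pure x) x = 0)
    (hdiag : ∀ (𝒢 : X → Filter X) (F : Filter X) (x₀ : X),
      lam (F.bind 𝒢) x₀ ≤ lam F x₀ + ⨆ t : X, lam (𝒢 t) t) :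
    ∀ (A : Set X) (ε : ℝ≥0∞) (x : X),
      adhSet lam A x ≤ adhSet lam (enlarge lam A ε) x + ε :=
  diag_implies_adh_enlarge_general lam hcent hdiag
end
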